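/- Let k be an algebraically closed field of characteristic zero and n > 1. For Γ, Γ' ∈ Λ and positive integers d, d', one has k[[Γ,d]] ⊆ k[[Γ',d']] if and only if Γ ⊆ Γ' and d divides d'. Consequently the family of rings k[[Γ,d]], with the inclusions, is a direct system of k-algebras. -/

import Mathlib

noncomputable section

instance (n : ℕ) : WellFoundedLT (Fin n) := inferInstance

noncomputable instance (n : ℕ) : IsOrderedCancelAddMonoid (Lex (Fin n → ℚ)) :=
  inferInstance

/-- `K`: the field of Hahn series over `k` with value group `ℚ^n` ordered
lexicographically (formal sums `Σ f_v x^v`, `v ∈ ℚ^n`, with well-ordered support). -/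
abbrev K (k : Type*) [Field k] (n : ℕ) : Type _ :=
  HahnSeries (Lex (Fin n → ℚ)) k

/-- The order-preserving monomial blowing-up `φ_{ij}` of `ℚ^n` (intended for `i < j`):
the `j`-th coordinate becomes `a i + a j`, the other coordinates are unchanged. -/
def blowUp (n : ℕ) (i j : Fin n) : (Fin n → ℚ) → (Fin n → ℚ) :=
  fun a l => if l = j then a i + a j else a l

/-- The order-preserving monomial blowing-down `φ_{ij}⁻¹` of `ℚ^n` (intended for `i < j`). -/
def blowDown (n : ℕ) (i j : Fin n) : (Fin n → ℚ) → (Fin n → ℚ) :=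
  fun a l => if l = j then a l - a i else a l

/-- `Φ` is a finite composition of order-preserving monomial blowing-ups `φ_{ij}`, `i < j`. -/
def IsBlowUpComp (n : ℕ) (Φ : (Fin n → ℚ) → (Fin n → ℚ)) : Prop :=
  ∃ L : List ((Fin n → ℚ) → (Fin n → ℚ)),
    (∀ g ∈ L, ∃ i j : Fin n, i < j ∧ g = blowUp n i j) ∧ Φ = L.foldr (· ∘ ·) id

/-- `Φ ∈ 𝒮`: `Φ` is a finite composition of order-preserving monomial
blowing-downs `φ_{ij}⁻¹`, `i < j`. -/
def IsBlowDownComp (n : ℕ) (Φ : (Fin n → ℚ) → (Fin n → ℚ)) : Prop :=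
  ∃ L : List ((Fin n → ℚ) → (Fin n → ℚ)),
    (∀ g ∈ L, ∃ i j : Fin n, i < j ∧ g = blowDown n i j) ∧ Φ = L.foldr (· ∘ ·) id

/-- `k[[Γ,d]]` for the `S`-cone `Γ = Φ(ℚ_{≥0}^n)`, `Φ ∈ 𝒮`: the set of Hahn series
whose Newton diagram (support) is contained in `Γ ∩ (1/d)ℤ^n`. -/
def piece (k : Type*) [Field k] (n : ℕ) (Φ : (Fin n → ℚ) → (Fin n → ℚ)) (d : ℕ) :
    Set (K k n) :=
  {f | ∀ v ∈ f.support,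
    ofLex v ∈ Φ '' {u : Fin n → ℚ | ∀ l, 0 ≤ u l} ∧
    ∀ l : Fin n, ∃ a : ℤ, ofLex v l = (a : ℚ) / (d : ℚ)}

/-! Testing on monomials, `k[[Γ,d]] ⊆ k[[Γ',d']]` means `Γ ∩ (1/d)ℤⁿ ⊆ Γ' ∩ (1/d')ℤⁿ`. Cones are
closed under positive scaling and every rational point has a multiple in `ℤⁿ`, so this forces
`Γ ⊆ Γ'`. Blowing-downs preserve `(1/d)ℤⁿ` and never change the first coordinate, so
`Φ (1/d, …, 1/d) ∈ Γ ∩ (1/d)ℤⁿ` has first coordinate `1/d`, which lies in `(1/d')ℤ` only if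
`d ∣ d'`.

For directedness, the generators `Φᵢ eₗ` of both cones are lexicographically nonnegative, and
a lexicographically nonnegative vector with leading index `p` is made componentwise nonnegative
by iterating the blowing-ups `φ_{pj}`. If a composition `M` of blowing-ups makes all generators
nonnegative and `Ψ ∈ 𝒮` is a left inverse of `M`, then `x = Ψ (M x)` puts both cones inside
`Ψ(ℚ_{≥0}^n)`. -/

section

open Function Set

section EndMonoid

variable {α : Type*}

theorem mapsTo_of_mem_closure {s : Set (Function.End α)} {S : Set α}
    (hs : ∀ g ∈ s, MapsTo g S S) {g : Function.End α} (hg : g ∈ Submonoid.closure s) :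
    MapsTo g S S := by
  induction hg using Submonoid.closure_induction with
  | mem g hg => exact hs g hg
  | one => exact mapsTo_id S
  | mul f g _ _ hf hg => exact hf.comp hg

theorem exists_linearMap_of_mem_closure {R : Type*} [Semiring R] [AddCommMonoid α] [Module R α]
    {s : Set (Function.End α)} (hs : ∀ g ∈ s, ∃ T : Module.End R α, ⇑T = g)
    {g : Function.End α} (hg : g ∈ Submonoid.closure s) : ∃ T : Module.End R α, ⇑T = g := by
  induction hg using Submonoid.closure_induction with
  | mem g hg => exact hs g hg
  | one => exact ⟨1, rfl⟩
  | mul f g _ _ hf hg =>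
    obtain ⟨S, rfl⟩ := hf
    obtain ⟨T, rfl⟩ := hg
    exact ⟨S * T, rfl⟩

end EndMonoid

variable {n : ℕ}

def blowUps (n : ℕ) : Set (Function.End (Fin n → ℚ)) := {g | ∃ i j, i < j ∧ g = blowUp n i j}

def blowDowns (n : ℕ) : Set (Function.End (Fin n → ℚ)) :=
  {g | ∃ i j, i < j ∧ g = blowDown n i j}

abbrev blowUpMonoid (n : ℕ) : Submonoid (Function.End (Fin n → ℚ)) :=
  Submonoid.closure (blowUps n)

abbrev blowDownMonoid (n : ℕ) : Submonoid (Function.End (Fin n → ℚ)) :=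
  Submonoid.closure (blowDowns n)

theorem isBlowUpComp_iff {Φ : (Fin n → ℚ) → (Fin n → ℚ)} :
    IsBlowUpComp n Φ ↔ (Φ : Function.End (Fin n → ℚ)) ∈ blowUpMonoid n := by
  constructor
  · rintro ⟨L, hL, rfl⟩
    exact (blowUpMonoid n).list_prod_mem (l := (L : List (Function.End (Fin n → ℚ))))
      fun g hg => Submonoid.subset_closure (hL g hg)
  · intro h
    obtain ⟨L, hL, hΦ⟩ := Submonoid.exists_list_of_mem_closure (s := blowUps n) h
    exact ⟨L, hL, hΦ.symm⟩

theorem isBlowDownComp_iff {Φ : (Fin n → ℚ) → (Fin n → ℚ)} :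
    IsBlowDownComp n Φ ↔ (Φ : Function.End (Fin n → ℚ)) ∈ blowDownMonoid n := by
  constructor
  · rintro ⟨L, hL, rfl⟩
    exact (blowDownMonoid n).list_prod_mem (l := (L : List (Function.End (Fin n → ℚ))))
      fun g hg => Submonoid.subset_closure (hL g hg)
  · intro h
    obtain ⟨L, hL, hΦ⟩ := Submonoid.exists_list_of_mem_closure (s := blowDowns n) h
    exact ⟨L, hL, hΦ.symm⟩

theorem isBlowUpComp_id : IsBlowUpComp n id :=
  isBlowUpComp_iff.2 (one_mem (blowUpMonoid n))

theorem IsBlowUpComp.comp {Φ Ψ : (Fin n → ℚ) → (Fin n → ℚ)} (hΦ : IsBlowUpComp n Φ)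
    (hΨ : IsBlowUpComp n Ψ) : IsBlowUpComp n (Φ ∘ Ψ) :=
  isBlowUpComp_iff.2 <| mul_mem (isBlowUpComp_iff.1 hΦ) (isBlowUpComp_iff.1 hΨ)

theorem isBlowUpComp_blowUp_iterate {i j : Fin n} (hij : i < j) (m : ℕ) :
    IsBlowUpComp n (blowUp n i j)^[m] :=
  isBlowUpComp_iff.2 <| pow_mem (M := Function.End (Fin n → ℚ))
    (Submonoid.subset_closure ⟨i, j, hij, rfl⟩ : blowUp n i j ∈ blowUpMonoid n) m

theorem IsBlowUpComp.mapsTo {Φ : (Fin n → ℚ) → (Fin n → ℚ)} (hΦ : IsBlowUpComp n Φ)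
    {S : Set (Fin n → ℚ)} (hS : ∀ i j, i < j → MapsTo (blowUp n i j) S S) : MapsTo Φ S S :=
  mapsTo_of_mem_closure (by rintro _ ⟨i, j, hij, rfl⟩; exact hS i j hij)
    (isBlowUpComp_iff.1 hΦ)

theorem IsBlowDownComp.mapsTo {Φ : (Fin n → ℚ) → (Fin n → ℚ)} (hΦ : IsBlowDownComp n Φ)
    {S : Set (Fin n → ℚ)} (hS : ∀ i j, i < j → MapsTo (blowDown n i j) S S) : MapsTo Φ S S :=
  mapsTo_of_mem_closure (by rintro _ ⟨i, j, hij, rfl⟩; exact hS i j hij)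
    (isBlowDownComp_iff.1 hΦ)

theorem IsBlowUpComp.exists_linearMap {Φ : (Fin n → ℚ) → (Fin n → ℚ)} (hΦ : IsBlowUpComp n Φ) :
    ∃ T : Module.End ℚ (Fin n → ℚ), ⇑T = Φ := by
  refine exists_linearMap_of_mem_closure ?_ (isBlowUpComp_iff.1 hΦ)
  rintro _ ⟨i, j, -, rfl⟩
  refine ⟨{ toFun := blowUp n i j, map_add' := fun a b => ?_, map_smul' := fun c a => ?_ }, rfl⟩
  all_goals
    ext l
    simp only [blowUp, Pi.add_apply, Pi.smul_apply, smul_eq_mul, RingHom.id_apply]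
    split_ifs <;> ring

theorem IsBlowDownComp.exists_linearMap {Φ : (Fin n → ℚ) → (Fin n → ℚ)}
    (hΦ : IsBlowDownComp n Φ) : ∃ T : Module.End ℚ (Fin n → ℚ), ⇑T = Φ := by
  refine exists_linearMap_of_mem_closure ?_ (isBlowDownComp_iff.1 hΦ)
  rintro _ ⟨i, j, -, rfl⟩
  refine ⟨{ toFun := blowDown n i j, map_add' := fun a b => ?_, map_smul' := fun c a => ?_ }, rfl⟩
  all_goals
    ext l
    simp only [blowDown, Pi.add_apply, Pi.smul_apply, smul_eq_mul, RingHom.id_apply]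
    split_ifs <;> ring

theorem blowDown_blowUp {i j : Fin n} (hij : i ≠ j) :
    LeftInverse (blowDown n i j) (blowUp n i j) := by
  intro a
  ext l
  by_cases hl : l = j <;> simp [blowDown, blowUp, hl, hij]

theorem IsBlowUpComp.exists_leftInverse {M : (Fin n → ℚ) → (Fin n → ℚ)}
    (hM : IsBlowUpComp n M) : ∃ Ψ, IsBlowDownComp n Ψ ∧ LeftInverse Ψ M := by
  suffices ∀ g ∈ blowUpMonoid n, ∃ Ψ ∈ blowDownMonoid n,
      LeftInverse (Ψ : (Fin n → ℚ) → (Fin n → ℚ)) g by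
    obtain ⟨Ψ, hΨ, hΨM⟩ := this M (isBlowUpComp_iff.1 hM)
    exact ⟨Ψ, isBlowDownComp_iff.2 hΨ, hΨM⟩
  intro g hg
  induction hg using Submonoid.closure_induction with
  | mem g hg =>
    obtain ⟨i, j, hij, rfl⟩ := hg
    exact ⟨blowDown n i j, Submonoid.subset_closure ⟨i, j, hij, rfl⟩, blowDown_blowUp hij.ne⟩
  | one => exact ⟨1, one_mem (blowDownMonoid n), fun _ => rfl⟩
  | mul f g _ _ hf hg =>
    obtain ⟨Ψf, hΨf, hf⟩ := hf
    obtain ⟨Ψg, hΨg, hg⟩ := hg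
    exact ⟨Ψg * Ψf, mul_mem hΨg hΨf, hf.comp hg⟩

theorem zero_le_toLex_of_eq_of_ne {v w : Fin n → ℚ} {i j : Fin n} (hij : i < j)
    (hw : ∀ l ≠ j, w l = v l) (hvi : v i = 0 → w = v) (hv : 0 ≤ toLex v) : 0 ≤ toLex w := by
  by_cases hi : v i = 0
  · rwa [hvi hi]
  rcases hv.lt_or_eq with hv | hv
  · obtain ⟨p, hp0, hp⟩ := hv
    have hpi : p ≤ i := not_lt.1 fun hip => hi (hp0 i hip).symm
    refine le_of_lt ⟨p, fun l hl => ?_, ?_⟩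
    · exact (hp0 l hl).trans (hw l (hl.trans_le hpi |>.trans hij).ne).symm
    · simpa [hw p (hpi.trans_lt hij).ne] using hp
  · exact absurd (congrFun (toLex.injective hv) i).symm hi

theorem mapsTo_blowUp_lexNonneg {i j : Fin n} (hij : i < j) :
    MapsTo (blowUp n i j) {v | 0 ≤ toLex v} {v | 0 ≤ toLex v} := fun v hv =>
  zero_le_toLex_of_eq_of_ne hij (fun l hl => if_neg hl)
    (fun hi => funext fun l => by by_cases hl : l = j <;> simp [blowUp, hl, hi]) hv

theorem mapsTo_blowDown_lexNonneg {i j : Fin n} (hij : i < j) :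
    MapsTo (blowDown n i j) {v | 0 ≤ toLex v} {v | 0 ≤ toLex v} := fun v hv =>
  zero_le_toLex_of_eq_of_ne hij (fun l hl => if_neg hl)
    (fun hi => funext fun l => by by_cases hl : l = j <;> simp [blowDown, hl, hi]) hv

theorem mapsTo_blowUp_nonneg (i j : Fin n) :
    MapsTo (blowUp n i j) {v | 0 ≤ v} {v | 0 ≤ v} := fun v hv l => by
  unfold blowUp
  split_ifs
  exacts [add_nonneg (hv i) (hv j), hv l]

theorem blowUp_iterate_apply {i j : Fin n} (hij : i ≠ j) (m : ℕ) (a : Fin n → ℚ) :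
    (blowUp n i j)^[m] a = update a j (a j + m * a i) := by
  induction m with
  | zero => simp
  | succ m ih =>
    rw [iterate_succ_apply', ih]
    ext l
    by_cases hl : l = j
    · subst hl
      simp only [blowUp, if_pos, update_self, update_of_ne hij, Nat.cast_add, Nat.cast_one]
      ring
    · simp [blowUp, hl]

theorem exists_isBlowUpComp_nonneg_at {v : Fin n → ℚ} {j : Fin n} (hv : 0 ≤ toLex v)
    (hj : v j < 0) : ∃ M, IsBlowUpComp n M ∧ 0 ≤ M v j ∧ ∀ l ≠ j, M v l = v l := by
  obtain ⟨p, hp0, hp⟩ : ∃ p, (∀ l < p, 0 = v l) ∧ 0 < v p :=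
    hv.lt_of_ne fun h => hj.ne (congrFun (toLex.injective h) j).symm
  have hpj : p < j := by
    rcases lt_trichotomy p j with h | rfl | h
    · exact h
    · exact absurd hp hj.not_gt
    · exact absurd (hp0 j h).symm hj.ne
  obtain ⟨m, hm⟩ := exists_nat_gt (-v j / v p)
  refine ⟨(blowUp n p j)^[m], isBlowUpComp_blowUp_iterate hpj m, ?_, fun l hl => ?_⟩
  · rw [blowUp_iterate_apply hpj.ne, update_self]
    have := (div_lt_iff₀ hp).1 hm
    linarith
  · rw [blowUp_iterate_apply hpj.ne, update_of_ne hl]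

theorem exists_isBlowUpComp_nonneg {v : Fin n → ℚ} (hv : 0 ≤ toLex v) :
    ∃ M, IsBlowUpComp n M ∧ 0 ≤ M v := by
  generalize hN : (Finset.univ.filter fun l => v l < 0).card = N
  induction N using Nat.strong_induction_on generalizing v with
  | _ N ih =>
  by_cases hnn : 0 ≤ v
  · exact ⟨id, isBlowUpComp_id, hnn⟩
  obtain ⟨j, hj⟩ : ∃ j, v j < 0 := by simpa [Pi.le_def] using hnn
  obtain ⟨M, hM, hMj, hMne⟩ := exists_isBlowUpComp_nonneg_at hv hj
  have hfewer : (Finset.univ.filter fun l => M v l < 0).card < N := by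
    rw [← hN]
    refine Finset.card_lt_card ((Finset.ssubset_iff_of_subset fun l hl => ?_).2 ⟨j, ?_, ?_⟩)
    · simp only [Finset.mem_filter, Finset.mem_univ, true_and] at hl ⊢
      have hlj : l ≠ j := by rintro rfl; linarith
      rwa [hMne l hlj] at hl
    · simpa using hj
    · simpa using hMj
  obtain ⟨M', hM', hM'v⟩ :=
    ih _ hfewer (hM.mapsTo (fun _ _ hij => mapsTo_blowUp_lexNonneg hij) hv) rfl
  exact ⟨M' ∘ M, hM'.comp hM, hM'v⟩

theorem exists_isBlowUpComp_forall_nonneg {s : Set (Fin n → ℚ)} (hs : s.Finite)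
    (h : ∀ v ∈ s, 0 ≤ toLex v) : ∃ M, IsBlowUpComp n M ∧ ∀ v ∈ s, 0 ≤ M v := by
  induction s, hs using Set.Finite.induction_on with
  | empty => exact ⟨id, isBlowUpComp_id, by simp⟩
  | @insert v s _ _ ih =>
    obtain ⟨M, hM, hMs⟩ := ih fun w hw => h w (mem_insert_of_mem v hw)
    obtain ⟨M', hM', hM'v⟩ := exists_isBlowUpComp_nonneg
      (hM.mapsTo (fun i j hij => mapsTo_blowUp_lexNonneg hij) (h v (mem_insert v s)))
    refine ⟨M' ∘ M, hM'.comp hM, ?_⟩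
    rintro w (rfl | hw)
    · exact hM'v
    · exact hM'.mapsTo (fun i j _ => mapsTo_blowUp_nonneg i j) (hMs w hw)

def cone (Φ : (Fin n → ℚ) → (Fin n → ℚ)) : Set (Fin n → ℚ) := Φ '' {u | ∀ l, 0 ≤ u l}

def lattice (n d : ℕ) : Set (Fin n → ℚ) := {v | ∀ l, ∃ a : ℤ, v l = a / d}

theorem piece_subset_piece_iff_inter_subset (k : Type*) [Field k]
    {Φ₁ Φ₂ : (Fin n → ℚ) → (Fin n → ℚ)} {d₁ d₂ : ℕ} :
    piece k n Φ₁ d₁ ⊆ piece k n Φ₂ d₂ ↔ cone Φ₁ ∩ lattice n d₁ ⊆ cone Φ₂ ∩ lattice n d₂ := by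
  refine ⟨fun h v hv => ?_, fun h f hf v hv => h (hf v hv)⟩
  have hmonomial : HahnSeries.single (toLex v) (1 : k) ∈ piece k n Φ₁ d₁ := by
    intro w hw
    rw [HahnSeries.support_single_of_ne one_ne_zero, mem_singleton_iff] at hw
    subst hw
    exact hv
  exact h hmonomial (toLex v) (by simp)

theorem lattice_mono {d₁ d₂ : ℕ} (hd : d₁ ∣ d₂) (hd₂ : d₂ ≠ 0) :
    lattice n d₁ ⊆ lattice n d₂ := by
  obtain ⟨c, rfl⟩ := hd
  have hc : (c : ℚ) ≠ 0 := by exact_mod_cast right_ne_zero_of_mul hd₂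
  intro v hv l
  obtain ⟨a, ha⟩ := hv l
  exact ⟨a * c, by rw [ha]; push_cast; exact (mul_div_mul_right _ _ hc).symm⟩

theorem piece_mono (k : Type*) [Field k] {Φ₁ Φ₂ : (Fin n → ℚ) → (Fin n → ℚ)} {d₁ d₂ : ℕ}
    (hΓ : cone Φ₁ ⊆ cone Φ₂) (hd : d₁ ∣ d₂) (hd₂ : d₂ ≠ 0) : piece k n Φ₁ d₁ ⊆ piece k n Φ₂ d₂ :=
  (piece_subset_piece_iff_inter_subset k).2 (inter_subset_inter hΓ (lattice_mono hd hd₂))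

theorem exists_nat_smul_mem_lattice_one (x : Fin n → ℚ) :
    ∃ N : ℕ, 0 < N ∧ (N : ℚ) • x ∈ lattice n 1 := by
  refine ⟨∏ l, (x l).den, Finset.prod_pos fun l _ => (x l).pos, fun l => ?_⟩
  obtain ⟨c, hc⟩ := Finset.dvd_prod_of_mem (fun l => (x l).den) (Finset.mem_univ l)
  refine ⟨c * (x l).num, ?_⟩
  rw [Pi.smul_apply, smul_eq_mul, hc, Nat.cast_one, div_one]
  push_cast
  rw [← Rat.mul_den_eq_num]
  ring

theorem smul_mem_cone (T : Module.End ℚ (Fin n → ℚ)) {c : ℚ} (hc : 0 ≤ c) {x : Fin n → ℚ}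
    (hx : x ∈ cone T) : c • x ∈ cone T := by
  obtain ⟨u, hu, rfl⟩ := hx
  exact ⟨c • u, fun l => mul_nonneg hc (hu l), map_smul T c u⟩

theorem cone_subset_of_inter_lattice_subset (T₁ T₂ : Module.End ℚ (Fin n → ℚ)) {d : ℕ}
    (hd : d ≠ 0) (h : cone T₁ ∩ lattice n d ⊆ cone T₂) : cone T₁ ⊆ cone T₂ := by
  intro x hx
  obtain ⟨N, hN, hNx⟩ := exists_nat_smul_mem_lattice_one x
  have hNx₂ := h ⟨smul_mem_cone T₁ N.cast_nonneg hx, lattice_mono (one_dvd d) hd hNx⟩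
  have hN' : (N : ℚ) ≠ 0 := by positivity
  simpa [smul_smul, inv_mul_cancel₀ hN'] using
    smul_mem_cone T₂ (inv_nonneg.2 N.cast_nonneg) hNx₂

theorem mapsTo_blowDown_lattice (i j : Fin n) (d : ℕ) :
    MapsTo (blowDown n i j) (lattice n d) (lattice n d) := fun v hv l => by
  obtain ⟨a, ha⟩ := hv i
  obtain ⟨b, hb⟩ := hv l
  unfold blowDown
  split_ifs
  · exact ⟨b - a, by rw [ha, hb]; push_cast; ring⟩
  · exact ⟨b, hb⟩

theorem IsBlowDownComp.apply_zero {Φ : (Fin n → ℚ) → (Fin n → ℚ)} (hΦ : IsBlowDownComp n Φ)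
    (hn : 0 < n) (a : Fin n → ℚ) : Φ a ⟨0, hn⟩ = a ⟨0, hn⟩ :=
  hΦ.mapsTo (S := {b | b ⟨0, hn⟩ = a ⟨0, hn⟩})
    (fun _ _ hij _ hb => (if_neg fun h => Nat.not_lt_zero _ (h ▸ hij)).trans hb) rfl

theorem IsBlowDownComp.dvd_of_inter_lattice_subset {Φ : (Fin n → ℚ) → (Fin n → ℚ)}
    (hΦ : IsBlowDownComp n Φ) (hn : 0 < n) {d₁ d₂ : ℕ} (hd₁ : d₁ ≠ 0)
    (h : cone Φ ∩ lattice n d₁ ⊆ lattice n d₂) : d₁ ∣ d₂ := by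
  let u : Fin n → ℚ := fun _ => (d₁ : ℚ)⁻¹
  have hu : u ∈ lattice n d₁ := fun _ => ⟨1, by simp [u]⟩
  obtain ⟨a, ha⟩ := h ⟨⟨u, fun _ => by positivity, rfl⟩,
    hΦ.mapsTo (fun i j _ => mapsTo_blowDown_lattice i j d₁) hu⟩ ⟨0, hn⟩
  have ha' : (d₁ : ℚ)⁻¹ = a / d₂ := (hΦ.apply_zero hn u).symm.trans ha
  have hd₁' : (d₁ : ℚ) ≠ 0 := by exact_mod_cast hd₁
  have hd₂ : (d₂ : ℚ) ≠ 0 := by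
    rintro h0
    simp [h0, hd₁'] at ha'
  have : (d₂ : ℤ) = d₁ * a := by
    field_simp at ha'
    exact_mod_cast ha'
  exact Int.natCast_dvd_natCast.1 ⟨a, this⟩

theorem cone_subset_cone_of_leftInverse (T S : Module.End ℚ (Fin n → ℚ))
    {Ψ : (Fin n → ℚ) → (Fin n → ℚ)} (hΨ : LeftInverse Ψ S)
    (h : ∀ l, 0 ≤ S (T (Pi.single l 1))) : cone T ⊆ cone Ψ := by
  rintro _ ⟨u, hu, rfl⟩
  refine ⟨S (T u), ?_, hΨ _⟩
  rw [pi_eq_sum_univ' u, map_sum, map_sum]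
  refine Finset.sum_nonneg (ι := Fin n) (N := Fin n → ℚ) fun l _ => ?_
  rw [map_smul, map_smul]
  exact smul_nonneg (hu l) (h l)

theorem IsBlowDownComp.exists_cone_subset {Φ₁ Φ₂ : (Fin n → ℚ) → (Fin n → ℚ)}
    (h₁ : IsBlowDownComp n Φ₁) (h₂ : IsBlowDownComp n Φ₂) :
    ∃ Ψ, IsBlowDownComp n Ψ ∧ cone Φ₁ ⊆ cone Ψ ∧ cone Φ₂ ⊆ cone Ψ := by
  have hgen : ∀ {Φ}, IsBlowDownComp n Φ → ∀ l, 0 ≤ toLex (Φ (Pi.single l 1)) := fun hΦ l =>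
    hΦ.mapsTo (fun i j hij => mapsTo_blowDown_lexNonneg hij)
      (Pi.toLex_monotone (Pi.single_nonneg.2 zero_le_one))
  obtain ⟨M, hM, hMgen⟩ := exists_isBlowUpComp_forall_nonneg
    ((finite_range fun l => Φ₁ (Pi.single l 1)).union (finite_range fun l => Φ₂ (Pi.single l 1)))
    (by rintro _ (⟨l, rfl⟩ | ⟨l, rfl⟩); exacts [hgen h₁ l, hgen h₂ l])
  obtain ⟨Ψ, hΨ, hΨM⟩ := hM.exists_leftInverse
  obtain ⟨S, rfl⟩ := hM.exists_linearMap
  obtain ⟨T₁, rfl⟩ := h₁.exists_linearMap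
  obtain ⟨T₂, rfl⟩ := h₂.exists_linearMap
  exact ⟨Ψ, hΨ, cone_subset_cone_of_leftInverse T₁ S hΨM fun l => hMgen _ (.inl ⟨l, rfl⟩),
    cone_subset_cone_of_leftInverse T₂ S hΨM fun l => hMgen _ (.inr ⟨l, rfl⟩)⟩

end

theorem piece_subset_piece_iff_general
    (k : Type*) [Field k]
    (n : ℕ) (hn : 1 < n)
    (Φ₁ Φ₂ : (Fin n → ℚ) → (Fin n → ℚ))
    (h₁ : IsBlowDownComp n Φ₁) (h₂ : IsBlowDownComp n Φ₂)
    (d₁ d₂ : ℕ) (hd₁ : 0 < d₁) (hd₂ : 0 < d₂) :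
    (piece k n Φ₁ d₁ ⊆ piece k n Φ₂ d₂ ↔
      (Φ₁ '' {u : Fin n → ℚ | ∀ l, 0 ≤ u l} ⊆ Φ₂ '' {u : Fin n → ℚ | ∀ l, 0 ≤ u l} ∧
        d₁ ∣ d₂)) ∧
    (∃ Φ₃ : (Fin n → ℚ) → (Fin n → ℚ), ∃ d₃ : ℕ, IsBlowDownComp n Φ₃ ∧ 0 < d₃ ∧
      piece k n Φ₁ d₁ ⊆ piece k n Φ₃ d₃ ∧ piece k n Φ₂ d₂ ⊆ piece k n Φ₃ d₃) := by
  refine ⟨⟨fun h => ?_, fun ⟨hΓ, hd⟩ => piece_mono k hΓ hd hd₂.ne'⟩, ?_⟩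
  · rw [piece_subset_piece_iff_inter_subset] at h
    obtain ⟨T₁, rfl⟩ := h₁.exists_linearMap
    obtain ⟨T₂, rfl⟩ := h₂.exists_linearMap
    exact ⟨cone_subset_of_inter_lattice_subset T₁ T₂ hd₁.ne' (h.trans Set.inter_subset_left),
      h₁.dvd_of_inter_lattice_subset (by omega) hd₁.ne' (h.trans Set.inter_subset_right)⟩
  · obtain ⟨Ψ, hΨ, hΓ₁, hΓ₂⟩ := h₁.exists_cone_subset h₂
    have hd : 0 < d₁ * d₂ := Nat.mul_pos hd₁ hd₂
    exact ⟨Ψ, d₁ * d₂, hΨ, hd, piece_mono k hΓ₁ (dvd_mul_right d₁ d₂) hd.ne',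
      piece_mono k hΓ₂ (dvd_mul_left d₂ d₁) hd.ne'⟩

/-- **(Lemma on the direct system of the rings `k[[Γ,d]]`).**  For `Γ = Φ₁(ℚ_{≥0}^n)`,
`Γ' = Φ₂(ℚ_{≥0}^n)` in `Λ` and positive integers `d, d'`, one has
`k[[Γ,d]] ⊆ k[[Γ',d']]` if and only if `Γ ⊆ Γ'` and `d ∣ d'`; consequently (the family
being directed) there are `Γ'' ∈ Λ` and `d'' > 0` with `k[[Γ,d]] ⊆ k[[Γ'',d'']]` and
`k[[Γ',d']] ⊆ k[[Γ'',d'']]`, so the rings `k[[Γ,d]]` with the inclusions form a direct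
system of `k`-algebras. -/
theorem piece_subset_piece_iff
    (k : Type*) [Field k] [IsAlgClosed k] [CharZero k]
    (n : ℕ) (hn : 1 < n)
    (Φ₁ Φ₂ : (Fin n → ℚ) → (Fin n → ℚ))
    (h₁ : IsBlowDownComp n Φ₁) (h₂ : IsBlowDownComp n Φ₂)
    (d₁ d₂ : ℕ) (hd₁ : 0 < d₁) (hd₂ : 0 < d₂) :
    (piece k n Φ₁ d₁ ⊆ piece k n Φ₂ d₂ ↔
      (Φ₁ '' {u : Fin n → ℚ | ∀ l, 0 ≤ u l} ⊆ Φ₂ '' {u : Fin n → ℚ | ∀ l, 0 ≤ u l} ∧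
        d₁ ∣ d₂)) ∧
    (∃ Φ₃ : (Fin n → ℚ) → (Fin n → ℚ), ∃ d₃ : ℕ, IsBlowDownComp n Φ₃ ∧ 0 < d₃ ∧
      piece k n Φ₁ d₁ ⊆ piece k n Φ₃ d₃ ∧ piece k n Φ₂ d₂ ⊆ piece k n Φ₃ d₃) :=
  piece_subset_piece_iff_general k n hn Φ₁ Φ₂ h₁ h₂ d₁ d₂ hd₁ hd₂
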